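/- arXiv:1609.03600 — 2 statements merged into one kernel-verified Lean document; each statement's English description precedes it below -/
import Mathlib

section
/- Let ā, p̄, q̲ > 0 be constants. Let P' ∈ ℝ^{n×n} be symmetric positive definite with P' ⪯ p̄ I, let Ā ∈ ℝ^{n×n} satisfy ‖Ā‖ ≤ ā, let Q ∈ ℝ^{n×n} be symmetric with q̲ I ⪯ Q, let R ∈ ℝ^{m×m} be symmetric positive semidefinite, and let L ∈ ℝ^{n×m}, C ∈ ℝ^{m×n}. Define P = (I − LC) Ā P' Āᵀ (I − LC)ᵀ + (I − LC) Q (I − LC)ᵀ + L R Lᵀ and suppose P is positive definite. Then, with α' = (1 + q̲/(2 ā² p̄))⁻¹ ∈ (0,1), it holds that Āᵀ (I − LC)ᵀ P⁻¹ (I − LC) Ā ⪯ α' (P')⁻¹. -/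
open Matrix

/-- The operator norm of a real matrix induced by the Euclidean vector norm. -/
noncomputable def opNorm {m n : ℕ} (A : Matrix (Fin m) (Fin n) ℝ) : ℝ :=
  ‖LinearMap.toContinuousLinearMap (Matrix.toEuclideanLin A)‖

/-!
With `F = (I - LC)Ā` and `d = q̲/(2ā²p̄)`, the Joseph update satisfies
`P - (1 + d) F P' Fᵀ = (I - LC)(Q - d Ā P' Āᵀ)(I - LC)ᵀ + L R Lᵀ ⪰ 0`,
because `d Ā P' Āᵀ ⪯ d p̄ ā² I ⪯ q̲ I ⪯ Q`. The bound `(1 + d) F P' Fᵀ ⪯ P` is then inverted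
through the two Schur complements of the block matrix `[[(1 + d)⁻¹ P'⁻¹, Fᵀ], [F, P]]`.
-/

open scoped MatrixOrder ComplexOrder

namespace Matrix

section SchurComplement

variable {𝕜 : Type*} [RCLike 𝕜] {m n : Type*} [Fintype m] [Fintype n] [DecidableEq m]
  [DecidableEq n]

theorem conjTranspose_mul_inv_mul_le_inv {P : Matrix m m 𝕜} {P' : Matrix n n 𝕜}
    (F : Matrix m n 𝕜) (hP : P.PosDef) (hP' : P'.PosDef) (h : F * P' * Fᴴ ≤ P) :
    Fᴴ * P⁻¹ * F ≤ P'⁻¹ := by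
  have : Invertible P := hP.isUnit.invertible
  have : Invertible P'⁻¹ := hP'.inv.isUnit.invertible
  have hblock : (fromBlocks P'⁻¹ Fᴴ Fᴴᴴ P).PosSemidef := by
    rwa [PosDef.fromBlocks₁₁ Fᴴ P hP'.inv, conjTranspose_conjTranspose,
      nonsing_inv_nonsing_inv P' ((isUnit_iff_isUnit_det _).1 hP'.isUnit), ← le_iff]
  rw [le_iff]
  simpa only [conjTranspose_conjTranspose] using (PosDef.fromBlocks₂₂ P'⁻¹ Fᴴ hP).1 hblock

theorem conjTranspose_mul_inv_mul_le_inv_smul {P : Matrix m m 𝕜} {P' : Matrix n n 𝕜}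
    (F : Matrix m n 𝕜) (hP : P.PosDef) (hP' : P'.PosDef) {c : ℝ} (hc : 0 < c)
    (h : c • (F * P' * Fᴴ) ≤ P) :
    Fᴴ * P⁻¹ * F ≤ c⁻¹ • P'⁻¹ := by
  have hcP' : (c • P')⁻¹ = c⁻¹ • P'⁻¹ := by
    refine inv_eq_left_inv ?_
    rw [smul_mul_smul_comm, inv_mul_cancel₀ hc.ne', one_smul,
      nonsing_inv_mul _ ((isUnit_iff_isUnit_det _).1 hP'.isUnit)]
  rw [← hcP']
  refine conjTranspose_mul_inv_mul_le_inv F hP (hP'.smul hc) ?_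
  rwa [Matrix.mul_smul, Matrix.smul_mul]

end SchurComplement

section Joseph

variable {𝕜 : Type*} [RCLike 𝕜] {m n : Type*} [Fintype m] [Fintype n]

theorem smul_mul_mul_conjTranspose_le [DecidableEq n] {A P' Q : Matrix n n 𝕜} {a p q d : ℝ}
    (hA : A * Aᴴ ≤ a ^ 2 • 1) (hP' : P' ≤ p • 1) (hQ : q • 1 ≤ Q) (hp : 0 ≤ p) (hd : 0 ≤ d)
    (hdq : d * (a ^ 2 * p) ≤ q) :
    d • (A * P' * Aᴴ) ≤ Q :=
  calc d • (A * P' * Aᴴ) ≤ d • (A * (p • 1) * Aᴴ) := by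
        gcongr
        exact star_right_conjugate_le_conjugate hP' A
    _ = (d * p) • (A * Aᴴ) := by rw [mul_smul_comm, Matrix.mul_one, smul_mul_assoc, smul_smul]
    _ ≤ (d * p) • (a ^ 2 • 1 : Matrix n n 𝕜) := by gcongr
    _ = (d * (a ^ 2 * p)) • 1 := by rw [smul_smul, mul_assoc, mul_comm p]
    _ ≤ q • 1 := by gcongr
    _ ≤ Q := hQ

theorem one_add_smul_conj_le_joseph {E A P' Q : Matrix n n 𝕜} {L : Matrix n m 𝕜}
    {R : Matrix m m 𝕜} {d : ℝ} (hQ : d • (A * P' * Aᴴ) ≤ Q) (hR : R.PosSemidef) :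
    (1 + d) • (E * A * P' * (E * A)ᴴ) ≤
      E * A * P' * Aᴴ * Eᴴ + E * Q * Eᴴ + L * R * Lᴴ :=
  calc (1 + d) • (E * A * P' * (E * A)ᴴ)
      = E * A * P' * Aᴴ * Eᴴ + E * (d • (A * P' * Aᴴ)) * Eᴴ := by
        simp only [conjTranspose_mul, add_smul, one_smul, Matrix.mul_smul, Matrix.smul_mul,
          Matrix.mul_assoc]
    _ ≤ E * A * P' * Aᴴ * Eᴴ + E * Q * Eᴴ := by
        gcongr
        exact star_right_conjugate_le_conjugate hQ E
    _ ≤ E * A * P' * Aᴴ * Eᴴ + E * Q * Eᴴ + L * R * Lᴴ :=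
        le_add_of_nonneg_right (hR.mul_mul_conjTranspose_same L).nonneg

end Joseph

section L2OpNorm

open scoped Matrix.Norms.L2Operator

variable {m n : Type*} [Fintype m] [Fintype n] [DecidableEq n]

theorem IsHermitian.le_l2_opNorm_smul_one {A : Matrix n n ℝ} (hA : A.IsHermitian) :
    A ≤ ‖A‖ • 1 := by
  rw [← Algebra.algebraMap_eq_smul_one]
  by_cases! nontriv : Nontrivial (Matrix n n ℝ)
  · refine le_algebraMap_of_spectrum_le (ha := hA.isSelfAdjoint) fun r hr => ?_
    calc r ≤ ‖r‖ := Real.le_norm_self r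
      _ ≤ ‖A‖ := spectrum.norm_le_norm_of_mem hr
  · exact (Subsingleton.elim _ _).le

theorem mul_conjTranspose_le_of_l2_opNorm_le [DecidableEq m] {A : Matrix m n ℝ} {a : ℝ}
    (h : ‖A‖ ≤ a) : A * Aᴴ ≤ a ^ 2 • 1 := by
  have hnorm : ‖A * Aᴴ‖ = ‖A‖ ^ 2 := by
    have := l2_opNorm_conjTranspose_mul_self Aᴴ
    rwa [conjTranspose_conjTranspose, l2_opNorm_conjTranspose, ← sq] at this
  calc A * Aᴴ ≤ ‖A * Aᴴ‖ • 1 := (isHermitian_mul_conjTranspose_self A).le_l2_opNorm_smul_one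
    _ ≤ a ^ 2 • 1 := by
      rw [hnorm]
      gcongr

end L2OpNorm

end Matrix

theorem stmt4_general (n m : ℕ) (abar pbar qlow : ℝ)
    (habar : 0 < abar) (hpbar : 0 < pbar) (hqlow : 0 < qlow)
    (P' : Matrix (Fin n) (Fin n) ℝ) (hP' : P'.PosDef)
    (hP'le : (pbar • (1 : Matrix (Fin n) (Fin n) ℝ) - P').PosSemidef)
    (Abar : Matrix (Fin n) (Fin n) ℝ) (hA : opNorm Abar ≤ abar)
    (Q : Matrix (Fin n) (Fin n) ℝ)
    (hQge : (Q - qlow • (1 : Matrix (Fin n) (Fin n) ℝ)).PosSemidef)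
    (R : Matrix (Fin m) (Fin m) ℝ) (hR : R.PosSemidef)
    (L : Matrix (Fin n) (Fin m) ℝ) (C : Matrix (Fin m) (Fin n) ℝ)
    (P : Matrix (Fin n) (Fin n) ℝ)
    (hP : P = (1 - L * C) * Abar * P' * Abarᵀ * (1 - L * C)ᵀ
        + (1 - L * C) * Q * (1 - L * C)ᵀ + L * R * Lᵀ)
    (hPpd : P.PosDef) :
    (1 + qlow / (2 * abar ^ 2 * pbar))⁻¹ ∈ Set.Ioo (0 : ℝ) 1 ∧
      ((1 + qlow / (2 * abar ^ 2 * pbar))⁻¹ • (P')⁻¹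
        - Abarᵀ * (1 - L * C)ᵀ * P⁻¹ * (1 - L * C) * Abar).PosSemidef := by
  set d := qlow / (2 * abar ^ 2 * pbar) with hd
  have hd0 : 0 < d := by positivity
  refine ⟨⟨by positivity, inv_lt_one_of_one_lt₀ (by linarith)⟩, ?_⟩
  have hdq : d * (abar ^ 2 * pbar) ≤ qlow := by
    rw [hd]
    field_simp
    linarith
  simp only [← conjTranspose_eq_transpose_of_trivial] at hP ⊢
  have hnoise : d • (Abar * P' * Abarᴴ) ≤ Q :=
    smul_mul_mul_conjTranspose_le (mul_conjTranspose_le_of_l2_opNorm_le hA) hP'le hQge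
      hpbar.le hd0.le hdq
  have hjoseph : (1 + d) • ((1 - L * C) * Abar * P' * ((1 - L * C) * Abar)ᴴ) ≤ P :=
    hP ▸ one_add_smul_conj_le_joseph hnoise hR
  have hcontract := conjTranspose_mul_inv_mul_le_inv_smul _ hPpd hP' (by positivity) hjoseph
  rw [conjTranspose_mul] at hcontract
  simpa only [le_iff, Matrix.mul_assoc] using hcontract

/-- Claim B.1: one-step contraction of the inverse covariance through the
Joseph-form covariance update, with contraction factor `α' = (1 + q̲/(2ā²p̄))⁻¹`. -/
theorem stmt4 (n m : ℕ) (abar pbar qlow : ℝ)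
    (habar : 0 < abar) (hpbar : 0 < pbar) (hqlow : 0 < qlow)
    (P' : Matrix (Fin n) (Fin n) ℝ) (hP' : P'.PosDef)
    (hP'le : (pbar • (1 : Matrix (Fin n) (Fin n) ℝ) - P').PosSemidef)
    (Abar : Matrix (Fin n) (Fin n) ℝ) (hA : opNorm Abar ≤ abar)
    (Q : Matrix (Fin n) (Fin n) ℝ) (hQsym : Q.IsHermitian)
    (hQge : (Q - qlow • (1 : Matrix (Fin n) (Fin n) ℝ)).PosSemidef)
    (R : Matrix (Fin m) (Fin m) ℝ) (hR : R.PosSemidef)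
    (L : Matrix (Fin n) (Fin m) ℝ) (C : Matrix (Fin m) (Fin n) ℝ)
    (P : Matrix (Fin n) (Fin n) ℝ)
    (hP : P = (1 - L * C) * Abar * P' * Abarᵀ * (1 - L * C)ᵀ
        + (1 - L * C) * Q * (1 - L * C)ᵀ + L * R * Lᵀ)
    (hPpd : P.PosDef) :
    (1 + qlow / (2 * abar ^ 2 * pbar))⁻¹ ∈ Set.Ioo (0 : ℝ) 1 ∧
      ((1 + qlow / (2 * abar ^ 2 * pbar))⁻¹ • (P')⁻¹
        - Abarᵀ * (1 - L * C)ᵀ * P⁻¹ * (1 - L * C) * Abar).PosSemidef :=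
  stmt4_general n m abar pbar qlow habar hpbar hqlow P' hP' hP'le Abar hA Q hQge R hR L C P hP hPpd
end

section
/- Let n ∈ ℕ, ε > 0, t₀ ∈ ℝ, and nonnegative constants d̄, Φ̄, ḡ₁, ḡ₂. Let Φ : ℝ × ℝ → ℝ^{n×n}, G₁, G₂ : ℝ → ℝ^{n×n}, and e₁, e₂ : ℝ → ℝⁿ be functions such that for every t ∈ [t₀, t₀ + ε] the map τ ↦ Φ(t,τ)(G₁(τ) e₁(τ) + G₂(τ) e₂(τ)) is integrable on [t₀, t], and such that for all t₀ ≤ τ ≤ t ≤ t₀ + ε: ‖Φ(t,τ)‖ ≤ Φ̄, ‖G₁(τ)‖ ≤ ḡ₁, ‖G₂(τ)‖ ≤ ḡ₂, ‖e₁(τ)‖ ≤ (τ − t₀) d̄, and ‖e₂(τ)‖ ≤ (t₀ + ε − τ) d̄. Then for every t ∈ [t₀, t₀ + ε], ‖ ∫_{t₀}^{t} Φ(t,τ)(G₁(τ) e₁(τ) + G₂(τ) e₂(τ)) dτ ‖ ≤ Φ̄ ( ḡ₁/2 + ḡ₂ ) d̄ ε². -/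
/-! The integrand is bounded on `[t₀, t]` by `Φ̄ d̄ (ḡ₁ (τ - t₀) + ḡ₂ ε)`, using `t₀ + ε - τ ≤ ε`.
Integrating this affine bound gives `Φ̄ d̄ (ḡ₁ s² / 2 + ḡ₂ ε s)` with `s = t - t₀ ∈ [0, ε]`,
which is at most `Φ̄ (ḡ₁ / 2 + ḡ₂) d̄ ε²`. -/

open Matrix MeasureTheory

theorem opNorm_nonneg {m n : ℕ} (A : Matrix (Fin m) (Fin n) ℝ) : 0 ≤ opNorm A :=
  norm_nonneg _

theorem norm_toLp_mulVec_le {m n : ℕ} (A : Matrix (Fin m) (Fin n) ℝ)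
    (x : EuclideanSpace ℝ (Fin n)) :
    ‖WithLp.toLp 2 (A *ᵥ x.ofLp)‖ ≤ opNorm A * ‖x‖ :=
  (LinearMap.toContinuousLinearMap (Matrix.toEuclideanLin A)).le_opNorm x

theorem norm_toLp_mulVec_add_mulVec_le {m k l₁ l₂ : ℕ} (Φ : Matrix (Fin m) (Fin k) ℝ)
    (G₁ : Matrix (Fin k) (Fin l₁) ℝ) (G₂ : Matrix (Fin k) (Fin l₂) ℝ)
    (x₁ : EuclideanSpace ℝ (Fin l₁)) (x₂ : EuclideanSpace ℝ (Fin l₂)) :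
    ‖WithLp.toLp 2 (Φ *ᵥ (G₁ *ᵥ x₁.ofLp + G₂ *ᵥ x₂.ofLp))‖ ≤
      opNorm Φ * (opNorm G₁ * ‖x₁‖ + opNorm G₂ * ‖x₂‖) :=
  calc _ ≤ opNorm Φ * ‖WithLp.toLp 2 (G₁ *ᵥ x₁.ofLp) + WithLp.toLp 2 (G₂ *ᵥ x₂.ofLp)‖ :=
        norm_toLp_mulVec_le Φ _
    _ ≤ opNorm Φ * (opNorm G₁ * ‖x₁‖ + opNorm G₂ * ‖x₂‖) := by
        gcongr
        · exact opNorm_nonneg Φ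
        · exact (norm_add_le _ _).trans
            (add_le_add (norm_toLp_mulVec_le G₁ x₁) (norm_toLp_mulVec_le G₂ x₂))

theorem intervalIntegral.integral_affine (a b α β : ℝ) :
    ∫ τ in a..b, (α * (τ - a) + β) = α * (b - a) ^ 2 / 2 + β * (b - a) := by
  rw [intervalIntegral.integral_comp_sub_right (fun x => α * x + β),
    intervalIntegral.integral_add (intervalIntegral.intervalIntegrable_id.const_mul α)
      intervalIntegrable_const, intervalIntegral.integral_const_mul, integral_id,
    intervalIntegral.integral_const]
  simp only [sub_self, smul_eq_mul]
  ring

theorem intervalIntegral.norm_integral_le_of_norm_le_affine {E : Type*} [NormedAddCommGroup E]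
    [NormedSpace ℝ E] {f : ℝ → E} {a b α β : ℝ} (hab : a ≤ b)
    (hf : ∀ τ ∈ Set.Ioc a b, ‖f τ‖ ≤ α * (τ - a) + β) :
    ‖∫ τ in a..b, f τ‖ ≤ α * (b - a) ^ 2 / 2 + β * (b - a) :=
  calc ‖∫ τ in a..b, f τ‖ ≤ ∫ τ in a..b, (α * (τ - a) + β) :=
        norm_integral_le_of_norm_le hab (ae_of_all _ hf)
          ((by fun_prop : Continuous fun τ => α * (τ - a) + β).intervalIntegrable a b)
    _ = α * (b - a) ^ 2 / 2 + β * (b - a) := integral_affine a b α β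

theorem stmt9_general (n : ℕ) (ε t₀ : ℝ)
    (dbar Φbar g1 g2 : ℝ) (hd : 0 ≤ dbar) (hΦbar : 0 ≤ Φbar)
    (hg1 : 0 ≤ g1) (hg2 : 0 ≤ g2)
    (Φ : ℝ → ℝ → Matrix (Fin n) (Fin n) ℝ)
    (G₁ G₂ : ℝ → Matrix (Fin n) (Fin n) ℝ)
    (e₁ e₂ : ℝ → EuclideanSpace ℝ (Fin n))
    (f : ℝ → ℝ → EuclideanSpace ℝ (Fin n))
    (hf : ∀ t τ, f t τ =
      (Φ t τ).mulVec ((G₁ τ).mulVec (e₁ τ) + (G₂ τ).mulVec (e₂ τ)))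
    (hbound : ∀ t τ, t₀ ≤ τ → τ ≤ t → t ≤ t₀ + ε →
      opNorm (Φ t τ) ≤ Φbar ∧ opNorm (G₁ τ) ≤ g1 ∧ opNorm (G₂ τ) ≤ g2 ∧
        ‖e₁ τ‖ ≤ (τ - t₀) * dbar ∧ ‖e₂ τ‖ ≤ (t₀ + ε - τ) * dbar) :
    ∀ t ∈ Set.Icc t₀ (t₀ + ε),
      ‖∫ τ in t₀..t, f t τ‖ ≤ Φbar * (g1 / 2 + g2) * dbar * ε ^ 2 := by
  rintro t ⟨ht₀, htε⟩
  have hf_le : ∀ τ ∈ Set.Ioc t₀ t,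
      ‖f t τ‖ ≤ Φbar * g1 * dbar * (τ - t₀) + Φbar * g2 * dbar * ε := by
    rintro τ ⟨hτ₀, hτt⟩
    obtain ⟨hΦ, hG₁, hG₂, he₁, he₂⟩ := hbound t τ hτ₀.le hτt htε
    have he₂' : ‖e₂ τ‖ ≤ ε * dbar := he₂.trans (mul_le_mul_of_nonneg_right (by linarith) hd)
    rw [← WithLp.toLp_ofLp (x := f t τ), hf]
    calc _ ≤ opNorm (Φ t τ) * (opNorm (G₁ τ) * ‖e₁ τ‖ + opNorm (G₂ τ) * ‖e₂ τ‖) :=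
          norm_toLp_mulVec_add_mulVec_le _ _ _ _ _
      _ ≤ Φbar * (g1 * ((τ - t₀) * dbar) + g2 * (ε * dbar)) := by
          have hG₁_nonneg := opNorm_nonneg (G₁ τ)
          have hG₂_nonneg := opNorm_nonneg (G₂ τ)
          gcongr
      _ = _ := by ring
  have hs : t - t₀ ≤ ε := by linarith
  have hε : 0 ≤ ε := by linarith
  calc _ ≤ Φbar * g1 * dbar * (t - t₀) ^ 2 / 2 + Φbar * g2 * dbar * ε * (t - t₀) :=
        intervalIntegral.norm_integral_le_of_norm_le_affine ht₀ hf_le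
    _ ≤ Φbar * g1 * dbar * ε ^ 2 / 2 + Φbar * g2 * dbar * ε * ε := by gcongr
    _ = _ := by ring

/-- Key estimate in Lemma 4: the piecewise-constant approximation error of the state
prediction over one sampling interval of length `ε` is bounded by
`Φ̄(ḡ₁/2 + ḡ₂) d̄ ε²`. -/
theorem stmt9 (n : ℕ) (ε t₀ : ℝ) (hε : 0 < ε)
    (dbar Φbar g1 g2 : ℝ) (hd : 0 ≤ dbar) (hΦbar : 0 ≤ Φbar)
    (hg1 : 0 ≤ g1) (hg2 : 0 ≤ g2)
    (Φ : ℝ → ℝ → Matrix (Fin n) (Fin n) ℝ)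
    (G₁ G₂ : ℝ → Matrix (Fin n) (Fin n) ℝ)
    (e₁ e₂ : ℝ → EuclideanSpace ℝ (Fin n))
    (f : ℝ → ℝ → EuclideanSpace ℝ (Fin n))
    (hf : ∀ t τ, f t τ =
      (Φ t τ).mulVec ((G₁ τ).mulVec (e₁ τ) + (G₂ τ).mulVec (e₂ τ)))
    (hint : ∀ t ∈ Set.Icc t₀ (t₀ + ε), IntervalIntegrable (f t) volume t₀ t)
    (hbound : ∀ t τ, t₀ ≤ τ → τ ≤ t → t ≤ t₀ + ε →
      opNorm (Φ t τ) ≤ Φbar ∧ opNorm (G₁ τ) ≤ g1 ∧ opNorm (G₂ τ) ≤ g2 ∧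
        ‖e₁ τ‖ ≤ (τ - t₀) * dbar ∧ ‖e₂ τ‖ ≤ (t₀ + ε - τ) * dbar) :
    ∀ t ∈ Set.Icc t₀ (t₀ + ε),
      ‖∫ τ in t₀..t, f t τ‖ ≤ Φbar * (g1 / 2 + g2) * dbar * ε ^ 2 :=
  stmt9_general n ε t₀ dbar Φbar g1 g2 hd hΦbar hg1 hg2 Φ G₁ G₂ e₁ e₂ f hf hbound
end
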